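/- Let F ∈ ℝ^{n_ψ × n_ψ} be Schur stable and let w : ℝ^{n_ψ} → ℝ^{n_ψ} satisfy ‖w(s)‖ ≤ γ‖s‖ for a constant γ ≥ 0. If γ · Σ_{k=0}^∞ ‖F^k‖ < 1, then every trajectory of s_{k+1} = F s_k + w(s_k) converges to the origin: s_k → 0 as k → ∞. -/

import Mathlib

/-!
Iterating the recursion gives the variation-of-constants formula
`s (k+1) = F^(k+1) s₀ + ∑_{j ≤ k} F^j w(s (k-j))`, so `aₖ = ‖sₖ‖` satisfies the discrete Volterra
inequality `a (k+1) ≤ cₖ₊₁ a₀ + γ ∑_{j ≤ k} cⱼ a (k-j)` with `cₖ = ‖F^k‖`. Summing it up to `n`,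
the convolution is at most `S = ∑ cₖ` times the partial sum of `a`, so the partial sums of `a` are
bounded by `(1 + S) a₀ / (1 - γ S)`. Hence `∑ aₖ` converges and `aₖ → 0`.
Summability of `‖F^k‖` comes from Gelfand's formula: the spectral radius is below `1`, so
`‖F^k‖ ≤ rᵏ` eventually for some `r < 1`.
-/

open Filter Topology Finset

theorem summable_norm_pow_of_spectralRadius_lt_one {A : Type*} [NormedRing A]
    [NormedAlgebra ℂ A] [CompleteSpace A] {a : A} (ha : spectralRadius ℂ a < 1) :
    Summable fun k : ℕ => ‖a ^ k‖ := by
  obtain ⟨r, hr0, hρr, hr1⟩ := ENNReal.lt_iff_exists_real_btwn.mp ha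
  have hroot : ∀ᶠ k : ℕ in atTop, ‖a ^ k‖ ^ (1 / k : ℝ) < r := by
    filter_upwards [(spectrum.pow_norm_pow_one_div_tendsto_nhds_spectralRadius a)
      |>.eventually_lt_const hρr] with k hk using (ENNReal.ofReal_lt_ofReal_iff'.mp hk).1
  refine (summable_geometric_of_lt_one hr0 (ENNReal.ofReal_lt_one.mp hr1))
    |>.of_norm_bounded_eventually_nat ?_
  filter_upwards [hroot, eventually_ne_atTop 0] with k hk hk0
  rw [norm_norm, ← Real.rpow_inv_natCast_pow (norm_nonneg (a ^ k)) hk0, ← one_div]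
  exact pow_le_pow_left₀ (by positivity) hk.le k

theorem spectralRadius_lt_one_of_forall_norm_lt_one {A : Type*} [NormedRing A]
    [NormedAlgebra ℂ A] [CompleteSpace A] {a : A} (ha : ∀ μ ∈ spectrum ℂ a, ‖μ‖ < 1) :
    spectralRadius ℂ a < 1 := by
  rcases (spectrum ℂ a).eq_empty_or_nonempty with h | h
  · simp [spectralRadius, h]
  · exact_mod_cast spectrum.spectralRadius_lt_of_forall_lt_of_nonempty h
      (r := 1) fun μ hμ => by exact_mod_cast ha μ hμ

theorem EuclideanSpace.norm_toLp_ofReal {ι : Type*} [Fintype ι] (v : ι → ℝ) :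
    ‖WithLp.toLp 2 (fun i => (v i : ℂ))‖ = ‖WithLp.toLp 2 v‖ := by
  simp [EuclideanSpace.norm_eq]

namespace Matrix

open scoped Matrix.Norms.L2Operator

theorem l2_opNorm_le_l2_opNorm_map_ofReal {m n : Type*} [Fintype m] [Fintype n]
    [DecidableEq n] (A : Matrix m n ℝ) : ‖A‖ ≤ ‖A.map (algebraMap ℝ ℂ)‖ := by
  refine ContinuousLinearMap.opNorm_le_bound _ (norm_nonneg _) fun x => ?_
  have hAx : A.map (algebraMap ℝ ℂ) *ᵥ (fun j => (x j : ℂ)) = fun i => ((A *ᵥ x) i : ℂ) := by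
    ext i
    simp [mulVec, dotProduct]
  calc _ = ‖WithLp.toLp 2 fun i => ((A *ᵥ x) i : ℂ)‖ :=
        (EuclideanSpace.norm_toLp_ofReal _).symm
    _ ≤ _ * ‖WithLp.toLp 2 fun j => (x j : ℂ)‖ := by
      have h := l2_opNorm_mulVec (A.map (algebraMap ℝ ℂ)) (WithLp.toLp 2 fun j => (x j : ℂ))
      rwa [WithLp.ofLp_toLp, hAx] at h
    _ = _ := by rw [EuclideanSpace.norm_toLp_ofReal]

/-- Gelfand's formula needs a complex Banach algebra, so the real powers are dominated by those
of the complexified matrix in the `L²` operator norm. -/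
theorem summable_norm_pow_toEuclideanCLM {m : Type*} [Fintype m] [DecidableEq m]
    (M : Matrix m m ℝ) (hM : ∀ μ ∈ spectrum ℂ (M.map (algebraMap ℝ ℂ)), ‖μ‖ < 1) :
    Summable fun k : ℕ => ‖toEuclideanCLM (𝕜 := ℝ) M ^ k‖ := by
  refine (summable_norm_pow_of_spectralRadius_lt_one
    (spectralRadius_lt_one_of_forall_norm_lt_one hM)).of_nonneg_of_le (fun _ => norm_nonneg _)
    fun k => ?_
  rw [← map_pow, ← cstar_norm_def, ← Matrix.map_pow]
  exact l2_opNorm_le_l2_opNorm_map_ofReal _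

end Matrix

theorem ContinuousLinearMap.eq_pow_apply_add_sum_of_succ_eq {R E : Type*} [Semiring R]
    [TopologicalSpace E] [AddCommMonoid E] [Module R E] (F : E →L[R] E) (u s : ℕ → E)
    (hs : ∀ k, s (k + 1) = F (s k) + u k) (k : ℕ) :
    s (k + 1) = (F ^ (k + 1)) (s 0) + ∑ j ∈ range (k + 1), (F ^ j) (u (k - j)) := by
  induction k with
  | zero => simp [hs]
  | succ k ih =>
    rw [hs, ih, sum_range_succ' _ (k + 1)]
    simp [pow_succ', map_sum, add_assoc]

theorem norm_succ_le_of_succ_eq {𝕜 E : Type*} [NontriviallyNormedField 𝕜]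
    [NormedAddCommGroup E] [NormedSpace 𝕜 E] (F : E →L[𝕜] E) {w : E → E} {γ : ℝ}
    (hw : ∀ x, ‖w x‖ ≤ γ * ‖x‖) (s : ℕ → E) (hs : ∀ k, s (k + 1) = F (s k) + w (s k))
    (k : ℕ) :
    ‖s (k + 1)‖ ≤ ‖F ^ (k + 1)‖ * ‖s 0‖ + γ * ∑ j ∈ range (k + 1), ‖F ^ j‖ * ‖s (k - j)‖ := by
  rw [F.eq_pow_apply_add_sum_of_succ_eq (fun k => w (s k)) s hs, mul_sum]
  refine (norm_add_le _ _).trans (add_le_add ((F ^ (k + 1)).le_opNorm _) ?_)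
  refine (norm_sum_le _ _).trans (sum_le_sum fun j _ => ?_)
  calc ‖(F ^ j) (w (s (k - j)))‖ ≤ ‖F ^ j‖ * (γ * ‖s (k - j)‖) :=
        (F ^ j).le_opNorm_of_le (hw _)
    _ = γ * (‖F ^ j‖ * ‖s (k - j)‖) := by ring

theorem sum_range_sum_mul_sub_le_mul {a c : ℕ → ℝ} (ha : ∀ k, 0 ≤ a k) (hc : ∀ k, 0 ≤ c k)
    (n : ℕ) :
    ∑ k ∈ range n, ∑ j ∈ range (k + 1), c j * a (k - j) ≤
      (∑ k ∈ range n, c k) * ∑ k ∈ range n, a k := by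
  rw [sum_range_diag_flip n fun j l => c j * a l, sum_mul]
  refine sum_le_sum fun m _ => ?_
  rw [← mul_sum]
  exact mul_le_mul_of_nonneg_left
    (sum_le_sum_of_subset_of_nonneg (range_subset_range.mpr (Nat.sub_le n m))
      fun k _ _ => ha k) (hc m)

theorem summable_of_succ_le_add_mul_sum_range {a c : ℕ → ℝ} {γ : ℝ} (ha : ∀ k, 0 ≤ a k)
    (hc : ∀ k, 0 ≤ c k) (hcs : Summable c) (hγ : 0 ≤ γ) (hsg : γ * ∑' k, c k < 1)
    (h : ∀ k, a (k + 1) ≤ c (k + 1) * a 0 + γ * ∑ j ∈ range (k + 1), c j * a (k - j)) :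
    Summable a := by
  set S := ∑' k, c k
  have hcS : ∀ n, ∑ k ∈ range n, c k ≤ S := fun n => hcs.sum_le_tsum _ fun k _ => hc k
  have hpartial : ∀ n,
      ∑ k ∈ range (n + 1), a k ≤ (1 + S) * a 0 + γ * S * ∑ k ∈ range n, a k := by
    intro n
    have hcshift : ∑ k ∈ range n, c (k + 1) ≤ S := by
      have := hcS (n + 1)
      rw [sum_range_succ'] at this
      linarith [hc 0]
    have hconv : γ * ∑ k ∈ range n, ∑ j ∈ range (k + 1), c j * a (k - j) ≤
        γ * S * ∑ k ∈ range n, a k := by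
      rw [mul_assoc]
      exact mul_le_mul_of_nonneg_left ((sum_range_sum_mul_sub_le_mul ha hc n).trans
        (mul_le_mul_of_nonneg_right (hcS n) (sum_nonneg fun k _ => ha k))) hγ
    calc ∑ k ∈ range (n + 1), a k = ∑ k ∈ range n, a (k + 1) + a 0 := sum_range_succ' a n
      _ ≤ ∑ k ∈ range n, (c (k + 1) * a 0 + γ * ∑ j ∈ range (k + 1), c j * a (k - j)) + a 0 :=
        add_le_add_left (sum_le_sum fun k _ => h k) _
      _ = (∑ k ∈ range n, c (k + 1)) * a 0 +
          γ * ∑ k ∈ range n, ∑ j ∈ range (k + 1), c j * a (k - j) + a 0 := by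
        rw [sum_add_distrib, sum_mul, mul_sum]
      _ ≤ (1 + S) * a 0 + γ * S * ∑ k ∈ range n, a k := by
        linarith [mul_le_mul_of_nonneg_right hcshift (ha 0), hconv]
  refine summable_of_sum_range_le (c := (1 + S) * a 0 / (1 - γ * S)) ha fun n => ?_
  rw [le_div_iff₀ (sub_pos.mpr hsg)]
  have hmono : ∑ k ∈ range n, a k ≤ ∑ k ∈ range (n + 1), a k :=
    sum_le_sum_of_subset_of_nonneg (range_subset_range.mpr n.le_succ) fun k _ _ => ha k
  linarith [hpartial n]

/-- Small-gain convergence of the perturbed closed-loop lifted dynamics. -/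
theorem stmt15 (n : ℕ) (M : Matrix (Fin n) (Fin n) ℝ)
    (hschur : ∀ μ ∈ spectrum ℂ (M.map (algebraMap ℝ ℂ)), ‖μ‖ < 1)
    (F : EuclideanSpace ℝ (Fin n) →L[ℝ] EuclideanSpace ℝ (Fin n))
    (hF : F = Matrix.toEuclideanCLM (𝕜 := ℝ) M)
    (γ : ℝ) (hγ : 0 ≤ γ)
    (w : EuclideanSpace ℝ (Fin n) → EuclideanSpace ℝ (Fin n))
    (hw : ∀ s, ‖w s‖ ≤ γ * ‖s‖)
    (hsg : γ * (∑' k : ℕ, ‖F ^ k‖) < 1)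
    (s : ℕ → EuclideanSpace ℝ (Fin n))
    (hs : ∀ k, s (k + 1) = F (s k) + w (s k)) :
    Tendsto s atTop (𝓝 0) := by
  have hsum : Summable fun k => ‖F ^ k‖ := hF ▸ M.summable_norm_pow_toEuclideanCLM hschur
  have hnorm : Summable fun k => ‖s k‖ :=
    summable_of_succ_le_add_mul_sum_range (fun k => norm_nonneg _) (fun k => norm_nonneg _)
      hsum hγ hsg (norm_succ_le_of_succ_eq F hw s hs)
  exact tendsto_zero_iff_norm_tendsto_zero.mpr hnorm.tendsto_atTop_zero
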